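/- For the single-row transfer matrix of the gray five-vertex model with ℓ columns to the left of the top Maya-diagram center: given partitions λ ⪯ μ with ℓ(λ) ≤ ℓ, there is exactly one configuration of a row with bottom boundary μ, top boundary λ, no paths entering on the left, and one path exiting on the right, and its weight is x^{|μ|-|λ|+ℓ}. -/

import Mathlib

/-- An integer partition: a weakly decreasing, eventually-zero sequence of
nonnegative integers (0-indexed: `part i` is the (i+1)-st part). -/
structure YPartition where
  part : ℕ → ℕ
  antitone : ∀ ⦃i j : ℕ⦄, i ≤ j → part j ≤ part i
  eventually_zero : ∃ N, ∀ i, N ≤ i → part i = 0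

/-- The conjugate partition: `conj j` = number of parts strictly larger than `j`,
i.e. the length of the (j+1)-st column (1-indexed λ'_{j+1}). -/
noncomputable def YPartition.conj (P : YPartition) (j : ℕ) : ℕ :=
  Nat.card {i : ℕ // j < P.part i}

/-- The size |λ| of a partition. -/
noncomputable def YPartition.size (P : YPartition) : ℕ := ∑ᶠ i, P.part i

/-- μ ⪯ λ : the interlacing relation λ₁ ≥ μ₁ ≥ λ₂ ≥ μ₂ ≥ ... -/
def Interlace (μ lam : YPartition) : Prop :=
  ∀ i, μ.part i ≤ lam.part i ∧ lam.part (i + 1) ≤ μ.part i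

/-- Hook length of the (0-indexed) cell (i,j), valid when `j < P.part i`:
arm + leg + 1 = (λ_i - j - 1) + (λ'_j - i - 1) + 1. -/
noncomputable def YPartition.hook (P : YPartition) (i j : ℕ) : ℕ :=
  (P.part i - j) + (P.conj j - i) - 1


/-- The Maya diagram of a partition: there is a particle at position p iff
p = λ_i - i for some i ≥ 1 (0-indexed: `part m - m - 1`); the center of the
diagram is at position 0. -/
def mayaParticle (P : YPartition) (p : ℤ) : Prop :=
  ∃ m : ℕ, p = (P.part m : ℤ) - m - 1

/-- The five allowed gray-vertex configurations (the same five local configurations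
as the white model), in terms of the occupancies of the (bottom, left, top, right)
edges: empty, bottom→right, left→right, bottom→top, left→top. -/
def okGray (b l t r : Prop) : Prop :=
  (¬b ∧ ¬l ∧ ¬t ∧ ¬r) ∨ (b ∧ ¬l ∧ ¬t ∧ r) ∨ (¬b ∧ l ∧ ¬t ∧ r) ∨
    (b ∧ ¬l ∧ t ∧ ¬r) ∨ (¬b ∧ l ∧ t ∧ ¬r)

/-- A configuration of a single gray row with bottom boundary the Maya diagram of μ
(centered at 0) and top boundary the Maya diagram of λ, centered one column to the
left of the bottom one.  The row has ℓ columns to the left of the top center and is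
infinite to the right; its columns are p ≥ -ℓ-1.  No path enters on the left, and a
path exits on the right (the horizontal edges are eventually occupied). -/
structure GrayRowConfig (μ lam : YPartition) (ℓ : ℕ) where
  h : ℤ → Prop
  left : ∀ p : ℤ, p ≤ -1 - (ℓ : ℤ) → ¬ h p
  right : ∃ N : ℤ, ∀ p : ℤ, N ≤ p → h p
  compat : ∀ p : ℤ, -1 - (ℓ : ℤ) ≤ p →
    okGray (mayaParticle μ p) (h p) (mayaParticle lam (p + 1)) (h (p + 1))


namespace GrayAux

/-- Position of the m-th Maya particle of `P`. -/
def B (P : YPartition) (m : ℕ) : ℤ := (P.part m : ℤ) - m - 1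

lemma maya_iff (P : YPartition) (p : ℤ) : mayaParticle P p ↔ ∃ m, p = B P m := Iff.rfl

lemma B_lt_of_lt (P : YPartition) {m n : ℕ} (h : m < n) : B P n < B P m := by
  have h1 : P.part n ≤ P.part m := P.antitone h.le
  have h2 : (P.part n : ℤ) ≤ P.part m := by exact_mod_cast h1
  have h3 : (m : ℤ) < n := by exact_mod_cast h
  simp only [B]; omega

lemma B_le_of_le (P : YPartition) {m n : ℕ} (h : m ≤ n) : B P n ≤ B P m := by
  rcases h.lt_or_eq with h | rfl
  · exact (B_lt_of_lt P h).le
  · exact le_rfl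

lemma B_le_zero_sub (P : YPartition) (m : ℕ) : B P m ≤ B P 0 - m := by
  have h1 : (P.part m : ℤ) ≤ P.part 0 := by exact_mod_cast P.antitone (Nat.zero_le m)
  simp only [B]; omega

/-- If p lies in the gap (B(m+1), B m], the only Maya index it can equal is m. -/
lemma B_inj_interval (P : YPartition) {k m : ℕ} {p : ℤ} (hk : p = B P k)
    (hlo : B P (m + 1) < p) (hhi : p ≤ B P m) : k = m := by
  rcases lt_trichotomy k m with h | h | h
  · have := B_lt_of_lt P h; omega
  · exact h
  · have : B P k ≤ B P (m + 1) := B_le_of_le P h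
    omega

section Row

variable {mu lam : YPartition} {l : ℕ}
variable (hinter : Interlace lam mu) (hlen : ∀ i, l ≤ i → lam.part i = 0)

/-- The canonical horizontal-edge occupancy. -/
def hfun (mu lam : YPartition) (p : ℤ) : Prop :=
  B mu 0 < p ∨ ∃ m, B mu (m + 1) < p ∧ p < B lam m

lemma okGray_r {b t r : Prop} {ll : Prop} (h : okGray b ll t r) :
    r ↔ ((b ∨ ll) ∧ ¬ t) := by
  unfold okGray at h; tauto

lemma hfun_iff (mu lam : YPartition) (p : ℤ) :
    hfun mu lam p ↔ (B mu 0 < p ∨ ∃ m, B mu (m + 1) < p ∧ p < B lam m) := Iff.rfl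

include hinter

lemma TB (m : ℕ) : B lam m ≤ B mu m := by
  have := (hinter m).1
  have : (lam.part m : ℤ) ≤ mu.part m := by exact_mod_cast this
  simp only [B]; omega

lemma BT (m : ℕ) : B mu (m + 1) < B lam m := by
  have := (hinter m).2
  have h : (mu.part (m + 1) : ℤ) ≤ lam.part m := by exact_mod_cast this
  simp only [B]; push_cast; omega

lemma mu_zero (hlen : ∀ i, l ≤ i → lam.part i = 0) {m : ℕ} (hm : l + 1 ≤ m) :
    mu.part m = 0 := by
  obtain ⟨i, rfl⟩ : ∃ i, m = i + 1 := ⟨m - 1, by omega⟩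
  have h1 := (hinter i).2
  rw [hlen i (by omega)] at h1
  omega

omit hinter in
/-- Characterization of where `hfun` fails: exactly the closed intervals [T_m, B_m]. -/
lemma not_hfun_iff (p : ℤ) :
    ¬ hfun mu lam p ↔ ∃ m, B lam m ≤ p ∧ p ≤ B mu m := by
  constructor
  · intro hp
    rw [hfun_iff] at hp
    push_neg at hp
    obtain ⟨h0, hm⟩ := hp
    have hex : ∃ m, B mu (m + 1) < p := by
      refine ⟨(B mu 0 - p).toNat, ?_⟩
      have h1 := B_le_zero_sub mu ((B mu 0 - p).toNat + 1)
      have h2 : (B mu 0 - p) ≤ ((B mu 0 - p).toNat : ℤ) := Int.self_le_toNat _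
      push_cast at h1 ⊢
      omega
    classical
    let m0 := Nat.find hex
    have hm0 : B mu (m0 + 1) < p := Nat.find_spec hex
    have hple : p ≤ B mu m0 := by
      rcases Nat.eq_zero_or_pos m0 with h | h
      · rw [h]; exact h0
      · have := Nat.find_min hex (m := m0 - 1) (by omega)
        have heq : m0 - 1 + 1 = m0 := by omega
        rw [heq] at this; omega
    exact ⟨m0, by have := hm m0 hm0; omega, hple⟩
  · rintro ⟨m, hT, hB⟩ hp
    rw [hfun_iff] at hp
    rcases hp with h0 | ⟨k, hk1, hk2⟩
    · have := B_le_of_le mu (Nat.zero_le m); omega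
    · rcases le_or_gt m k with h | h
      · have := B_le_of_le lam h; omega
      · have := B_le_of_le mu (show k + 1 ≤ m by omega); omega

/-- In region 2 [T_m, B_m], a bottom particle forces p = B_m. -/
lemma reg2_b {m : ℕ} {p : ℤ} (hT : B lam m ≤ p) (hB : p ≤ B mu m)
    (hb : mayaParticle mu p) : p = B mu m := by
  obtain ⟨k, hk⟩ := hb
  replace hk : p = B mu k := hk
  have := BT hinter m
  have := B_inj_interval mu hk (by omega) hB
  rw [this] at hk; exact hk

/-- In region 2, a top particle at p+1 forces p = B_m, m ≥ 1 and p+1 = T_{m-1}. -/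
lemma reg2_t {m : ℕ} {p : ℤ} (hT : B lam m ≤ p) (hB : p ≤ B mu m)
    (ht : mayaParticle lam (p + 1)) :
    ∃ j, m = j + 1 ∧ p + 1 = B lam j ∧ p = B mu m := by
  obtain ⟨k, hk⟩ := ht
  replace hk : p + 1 = B lam k := hk
  rcases Nat.eq_zero_or_pos m with h0 | h0
  · exfalso
    subst h0
    have := B_le_of_le lam (Nat.zero_le k)
    omega
  · obtain ⟨j, rfl⟩ : ∃ j, m = j + 1 := ⟨m - 1, by omega⟩
    have hbt := BT hinter j
    have hkj : k = j := B_inj_interval lam hk (by omega) (by omega)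
    rw [hkj] at hk
    exact ⟨j, rfl, hk, by omega⟩

/-- In region 3 (B_{m+1}, T_m), no bottom particle. -/
lemma reg3_b {m : ℕ} {p : ℤ} (h1 : B mu (m + 1) < p) (h2 : p < B lam m)
    (hb : mayaParticle mu p) : False := by
  obtain ⟨k, hk⟩ := hb
  replace hk : p = B mu k := hk
  have hTBm := TB hinter m
  have := B_inj_interval mu hk h1 (by omega)
  rw [this] at hk; omega

/-- In region 3, a top particle at p+1 forces p+1 = T_m. -/
lemma reg3_t {m : ℕ} {p : ℤ} (h1 : B mu (m + 1) < p) (h2 : p < B lam m)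
    (ht : mayaParticle lam (p + 1)) : p + 1 = B lam m := by
  obtain ⟨k, hk⟩ := ht
  replace hk : p + 1 = B lam k := hk
  have hbt := BT hinter (m + 1)
  have hTB1 := TB hinter (m + 1)
  have := B_inj_interval lam (m := m) hk (by omega) (by omega)
  rw [this] at hk; exact hk

/-- The canonical configuration is locally compatible at every column. -/
lemma hfun_compat (p : ℤ) :
    okGray (mayaParticle mu p) (hfun mu lam p) (mayaParticle lam (p + 1))
      (hfun mu lam (p + 1)) := by
  classical
  by_cases hp : hfun mu lam p
  · -- left edge occupied: region 1 or region 3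
    rcases (hfun_iff mu lam p).mp hp with h0 | ⟨m, h1, h2⟩
    · -- region 1 : p > B mu 0
      have hb : ¬ mayaParticle mu p := by
        rintro ⟨k, hk⟩
        replace hk : p = B mu k := hk
        have := B_le_of_le mu (Nat.zero_le k); omega
      have ht : ¬ mayaParticle lam (p + 1) := by
        rintro ⟨k, hk⟩
        replace hk : p + 1 = B lam k := hk
        have := B_le_of_le lam (Nat.zero_le k)
        have := TB hinter 0
        omega
      have hr : hfun mu lam (p + 1) := (hfun_iff mu lam _).mpr (Or.inl (by omega))
      exact Or.inr (Or.inr (Or.inl ⟨hb, (hfun_iff mu lam _).mpr (Or.inl h0), ht, hr⟩))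
    · -- region 3
      have hb : ¬ mayaParticle mu p := fun hb => reg3_b hinter h1 h2 hb
      by_cases ht : mayaParticle lam (p + 1)
      · have hpt := reg3_t hinter h1 h2 ht
        have hr : ¬ hfun mu lam (p + 1) := by
          rw [not_hfun_iff]
          exact ⟨m, by omega, by have := TB hinter m; omega⟩
        exact Or.inr (Or.inr (Or.inr (Or.inr ⟨hb, (hfun_iff mu lam _).mpr (Or.inr ⟨m, h1, h2⟩), ht, hr⟩)))
      · have hlt : p + 1 < B lam m := by
          rcases lt_or_eq_of_le (show p + 1 ≤ B lam m by omega) with h | h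
          · exact h
          · exact absurd ⟨m, h⟩ ht
        have hr : hfun mu lam (p + 1) := (hfun_iff mu lam _).mpr (Or.inr ⟨m, by omega, hlt⟩)
        exact Or.inr (Or.inr (Or.inl ⟨hb, (hfun_iff mu lam _).mpr (Or.inr ⟨m, h1, h2⟩), ht, hr⟩))
  · -- left edge empty: region 2
    obtain ⟨m, hT, hB⟩ := (not_hfun_iff p).mp hp
    by_cases hb : mayaParticle mu p
    · have hpB := reg2_b hinter hT hB hb
      by_cases ht : mayaParticle lam (p + 1)
      · obtain ⟨j, rfl, hpt, _⟩ := reg2_t hinter hT hB ht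
        have hr : ¬ hfun mu lam (p + 1) := by
          rw [not_hfun_iff]
          exact ⟨j, by omega, by have := TB hinter j; omega⟩
        exact Or.inr (Or.inr (Or.inr (Or.inl ⟨hb, hp, ht, hr⟩)))
      · have hr : hfun mu lam (p + 1) := by
          rcases Nat.eq_zero_or_pos m with h0 | h0
          · subst h0; exact (hfun_iff mu lam _).mpr (Or.inl (by omega))
          · obtain ⟨j, rfl⟩ : ∃ j, m = j + 1 := ⟨m - 1, by omega⟩
            have hbt := BT hinter j
            have hlt : p + 1 < B lam j := by
              rcases lt_or_eq_of_le (show p + 1 ≤ B lam j by omega) with h | h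
              · exact h
              · exact absurd ⟨j, h⟩ ht
            exact (hfun_iff mu lam _).mpr (Or.inr ⟨j, by omega, hlt⟩)
        exact Or.inr (Or.inl ⟨hb, hp, ht, hr⟩)
    · have hpB : p < B mu m := by
        rcases lt_or_eq_of_le hB with h | h
        · exact h
        · exact absurd ⟨m, h⟩ hb
      have ht : ¬ mayaParticle lam (p + 1) := by
        intro ht
        obtain ⟨j, rfl, hpt, hpB'⟩ := reg2_t hinter hT hB ht
        omega
      have hr : ¬ hfun mu lam (p + 1) := by
        rw [not_hfun_iff]
        exact ⟨m, by omega, by omega⟩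
      exact Or.inl ⟨hb, hp, ht, hr⟩

omit hinter in
lemma config_uniq (C C' : GrayRowConfig mu lam l) : C.h = C'.h := by
  have key : ∀ n : ℕ, (C.h (-1 - (l : ℤ) + n) ↔ C'.h (-1 - (l : ℤ) + n)) := by
    intro n
    induction n with
    | zero =>
      exact iff_of_false (C.left _ (by omega)) (C'.left _ (by omega))
    | succ n ih =>
      have hc := okGray_r (C.compat (-1 - (l : ℤ) + n) (by omega))
      have hc' := okGray_r (C'.compat (-1 - (l : ℤ) + n) (by omega))
      have hcast : -1 - (l : ℤ) + ((n + 1 : ℕ) : ℤ) = (-1 - (l : ℤ) + n) + 1 := by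
        push_cast; ring
      rw [hcast, hc, hc', ih]
  funext p
  apply propext
  rcases le_or_gt p (-1 - (l : ℤ)) with hp | hp
  · exact iff_of_false (C.left p hp) (C'.left p hp)
  · have h0 : (0 : ℤ) ≤ p + 1 + l := by omega
    have hcast : p = -1 - (l : ℤ) + ((p + 1 + l).toNat : ℤ) := by
      have := Int.toNat_of_nonneg h0; omega
    rw [hcast]; exact key _

include hlen

lemma hfun_left (p : ℤ) (hp : p ≤ -1 - (l : ℤ)) : ¬ hfun mu lam p := by
  rw [not_hfun_iff]
  set m := (-p - 1).toNat with hm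
  have hmz : (m : ℤ) = -p - 1 := by
    rw [hm]; rw [Int.toNat_of_nonneg (by omega)]
  have hml : l ≤ m := by omega
  have hl0 : lam.part m = 0 := hlen m hml
  refine ⟨m, ?_, ?_⟩
  · show B lam m ≤ p
    simp only [B, hl0]; push_cast; omega
  · show p ≤ B mu m
    have : (0 : ℤ) ≤ mu.part m := Int.natCast_nonneg _
    simp only [B]; omega

/-- The canonical configuration. -/
def theConfig : GrayRowConfig mu lam l where
  h := hfun mu lam
  left := fun p hp => hfun_left hinter hlen p hp
  right := ⟨B mu 0 + 1, fun p hp => (hfun_iff mu lam p).mpr (Or.inl (by omega))⟩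
  compat := fun p _ => hfun_compat hinter p

/-- The weight count. -/
lemma card_eq :
    Nat.card {p : ℤ // -(l : ℤ) ≤ p ∧ ¬ hfun mu lam p} + lam.size = mu.size + l := by
  classical
  set F : Finset ℤ :=
    (Finset.range (l + 1)).biUnion
      (fun m => Finset.Icc (max (-(l : ℤ)) (B lam m)) (B mu m)) with hF
  have hset : {p : ℤ | -(l : ℤ) ≤ p ∧ ¬ hfun mu lam p} = ↑F := by
    ext p
    simp only [Set.mem_setOf_eq, hF, Finset.coe_biUnion, Finset.mem_coe,
      Finset.mem_biUnion, Finset.mem_range, Finset.mem_Icc, Set.mem_iUnion]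
    constructor
    · rintro ⟨hp, hnh⟩
      obtain ⟨m, hT, hB⟩ := (not_hfun_iff (p := p)).mp hnh
      have hml : m ≤ l := by
        by_contra hc
        have h0 : mu.part m = 0 := mu_zero hinter hlen (by omega)
        have : B mu m = -(m : ℤ) - 1 := by simp only [B, h0]; push_cast; ring
        omega
      exact ⟨m, ⟨by omega, ⟨max_le hp hT, hB⟩⟩⟩
    · rintro ⟨m, ⟨_, ⟨hmax, hB⟩⟩⟩
      have h1 : -(l : ℤ) ≤ p := le_trans (le_max_left _ _) hmax
      have h2 : B lam m ≤ p := le_trans (le_max_right _ _) hmax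
      exact ⟨h1, (not_hfun_iff (p := p)).mpr ⟨m, h2, hB⟩⟩
  have hcard : Nat.card {p : ℤ // -(l : ℤ) ≤ p ∧ ¬ hfun mu lam p} = F.card := by
    have h1 : Nat.card {p : ℤ // -(l : ℤ) ≤ p ∧ ¬ hfun mu lam p}
        = ({p : ℤ | -(l : ℤ) ≤ p ∧ ¬ hfun mu lam p}).ncard := Nat.card_coe_set_eq _
    rw [h1, hset, Set.ncard_coe_finset]
  have hdisj : ∀ m ∈ Finset.range (l + 1), ∀ n ∈ Finset.range (l + 1), m ≠ n →
      Disjoint (Finset.Icc (max (-(l : ℤ)) (B lam m)) (B mu m))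
        (Finset.Icc (max (-(l : ℤ)) (B lam n)) (B mu n)) := by
    have key : ∀ m n : ℕ, m < n →
        Disjoint (Finset.Icc (max (-(l : ℤ)) (B lam m)) (B mu m))
          (Finset.Icc (max (-(l : ℤ)) (B lam n)) (B mu n)) := by
      intro m n hmn
      rw [Finset.disjoint_left]
      intro a ha hb
      rw [Finset.mem_Icc] at ha hb
      have h1 : B mu n ≤ B mu (m + 1) := B_le_of_le mu (by omega)
      have h2 := BT hinter m
      have h3 : B lam m ≤ a := le_trans (le_max_right _ _) ha.1
      omega
    intro m _ n _ hmn
    rcases Nat.lt_or_ge m n with h | h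
    · exact key m n h
    · exact (key n m (by omega)).symm
  have hbi : F.card = ∑ m ∈ Finset.range (l + 1),
      ((B mu m + 1 - max (-(l : ℤ)) (B lam m)).toNat) := by
    rw [hF, Finset.card_biUnion hdisj]
    exact Finset.sum_congr rfl (fun m _ => Int.card_Icc _ _)
  have hsizel : lam.size = ∑ m ∈ Finset.range (l + 1), lam.part m := by
    apply finsum_eq_sum_of_support_subset
    intro i hi
    simp only [Function.mem_support] at hi
    simp only [Finset.coe_range, Set.mem_Iio]
    by_contra hc
    exact hi (hlen i (by omega))
  have hsizem : mu.size = ∑ m ∈ Finset.range (l + 1), mu.part m := by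
    apply finsum_eq_sum_of_support_subset
    intro i hi
    simp only [Function.mem_support] at hi
    simp only [Finset.coe_range, Set.mem_Iio]
    by_contra hc
    exact hi (mu_zero hinter hlen (by omega))
  rw [hcard, hbi, hsizel, hsizem]
  -- now a purely arithmetic statement; prove it in ℤ
  have harith : (∑ m ∈ Finset.range (l + 1),
        ((B mu m + 1 - max (-(l : ℤ)) (B lam m)).toNat) : ℤ)
      + ∑ m ∈ Finset.range (l + 1), (lam.part m : ℤ)
      = ∑ m ∈ Finset.range (l + 1), (mu.part m : ℤ) + l := by
    push_cast
    have hterm : ∀ m ∈ Finset.range l,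
        (((B mu m + 1 - max (-(l : ℤ)) (B lam m)).toNat : ℤ))
          = (mu.part m : ℤ) - (lam.part m : ℤ) + 1 := by
      intro m hm
      rw [Finset.mem_range] at hm
      have hTge : -(l : ℤ) ≤ B lam m := by
        simp only [B]
        have : (0 : ℤ) ≤ lam.part m := Int.natCast_nonneg _
        push_cast; omega
      rw [max_eq_right hTge]
      have hle : (lam.part m : ℤ) ≤ mu.part m := by exact_mod_cast (hinter m).1
      rw [Int.toNat_of_nonneg (by simp only [B]; omega)]
      simp only [B]; ring
    have htl : (((B mu l + 1 - max (-(l : ℤ)) (B lam l)).toNat : ℤ)) = (mu.part l : ℤ) := by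
      have hl0 : lam.part l = 0 := hlen l le_rfl
      have hTle : B lam l ≤ -(l : ℤ) := by simp only [B, hl0]; push_cast; omega
      rw [max_eq_left hTle]
      rw [Int.toNat_of_nonneg (by simp only [B]; have : (0:ℤ) ≤ mu.part l := Int.natCast_nonneg _; omega)]
      simp only [B]; ring
    rw [Finset.sum_range_succ, Finset.sum_range_succ (f := fun m => ((lam.part m : ℤ))),
      Finset.sum_range_succ (f := fun m => ((mu.part m : ℤ))), htl,
      Finset.sum_congr rfl hterm, hlen l le_rfl]
    push_cast
    rw [Finset.sum_add_distrib, Finset.sum_sub_distrib, Finset.sum_const, Finset.card_range]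
    ring
  exact_mod_cast harith


end Row

end GrayAux

/-- For the gray five-vertex row with ℓ columns to the left of the top Maya-diagram
center: if λ ⪯ μ and λ has at most ℓ nonzero parts, there is exactly one valid
configuration, and its weight is x^{|μ|-|λ|+ℓ} (the number of weight-x vertices,
i.e. of vertices of the domain whose right edge is unoccupied, equals |μ|-|λ|+ℓ). -/
theorem gray_row_transfer (μ lam : YPartition) (ℓ : ℕ)
    (hinter : Interlace lam μ) (hlen : ∀ i, ℓ ≤ i → lam.part i = 0) :
    Nonempty (GrayRowConfig μ lam ℓ) ∧
    (∀ C C' : GrayRowConfig μ lam ℓ, C.h = C'.h) ∧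
    (∀ C : GrayRowConfig μ lam ℓ,
      Nat.card {p : ℤ // -(ℓ : ℤ) ≤ p ∧ ¬ C.h p} + lam.size = μ.size + ℓ) := by
  classical
  refine ⟨⟨GrayAux.theConfig hinter hlen⟩, fun C C' => GrayAux.config_uniq C C', ?_⟩
  intro C
  have hC : C.h = GrayAux.hfun μ lam :=
    GrayAux.config_uniq C (GrayAux.theConfig hinter hlen)
  rw [hC]
  exact GrayAux.card_eq hinter hlen
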